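/- Let E be a directed graph. If E has a vertex v that receives infinitely many edges and emits at least one edge e, then the characteristic function of any edge emitted by v does not lie in the closed span of {g · f : g ∈ c_c(E¹), f ∈ J}, where J is the closed span of characteristic functions of vertices receiving finitely many and at least one edge, and (g·f)(e) = g(e)·f(s(e)). -/
import Mathlib


/-- if a vertex `v` of a directed graph receives infinitely many
edges but emits an edge `e`, then every element of the closed span of
`{g · f : g ∈ c_c(E¹), f ∈ J}` vanishes at `e` — where `J` is the closed span
of characteristic functions of vertices receiving finitely many but at least
one edge, and `(g·f)(e') = g(e')·f(s(e'))` — and hence `δ_e` does not lie in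
this closed span. -/
theorem stmt11
    {E0 E1 : Type*} (r s : E1 → E0)
    (v : E0) (hv : (r ⁻¹' {v}).Infinite) (e : E1) (he : s e = v)
    (J : Set (E0 → ℂ))
    (hJ : J = closure (Submodule.span ℂ
      {f : E0 → ℂ | ∃ w : E0, ((r ⁻¹' {w}).Finite ∧ (r ⁻¹' {w}).Nonempty) ∧
        f = Set.indicator {w} (fun _ => (1 : ℂ))} : Set (E0 → ℂ)))
    (XJ : Set (E1 → ℂ))
    (hXJ : XJ = closure (Submodule.span ℂ
      {x : E1 → ℂ | ∃ g : E1 → ℂ, (Function.support g).Finite ∧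
        ∃ f ∈ J, x = fun e' => g e' * f (s e')} : Set (E1 → ℂ))) :
    (∀ x ∈ XJ, x e = 0) ∧
      Set.indicator {e} (fun _ => (1 : ℂ)) ∉ XJ := by
  have hJv : ∀ f ∈ J, f v = 0 := by
    intro f hf
    rw [hJ] at hf
    have hsub : (Submodule.span ℂ
        {f : E0 → ℂ | ∃ w : E0, ((r ⁻¹' {w}).Finite ∧ (r ⁻¹' {w}).Nonempty) ∧
          f = Set.indicator {w} (fun _ => (1 : ℂ))} : Set (E0 → ℂ)) ⊆ {f | f v = 0} := by
      intro g hg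
      have : g ∈ LinearMap.ker (LinearMap.proj (R := ℂ) (φ := fun _ : E0 => ℂ) v) := by
        refine Submodule.span_le.mpr ?_ hg
        rintro _ ⟨w, ⟨hwfin, _⟩, rfl⟩
        have hwv : v ≠ w := by rintro rfl; exact hv hwfin
        simp [LinearMap.mem_ker, Set.indicator, hwv]
      simpa using this
    exact (closure_minimal hsub
      (isClosed_eq (continuous_apply v) continuous_const)) hf
  have main : ∀ x ∈ XJ, x e = 0 := by
    intro x hx
    rw [hXJ] at hx
    have hsub : (Submodule.span ℂ
        {x : E1 → ℂ | ∃ g : E1 → ℂ, (Function.support g).Finite ∧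
          ∃ f ∈ J, x = fun e' => g e' * f (s e')} : Set (E1 → ℂ)) ⊆ {x | x e = 0} := by
      intro y hy
      have : y ∈ LinearMap.ker (LinearMap.proj (R := ℂ) (φ := fun _ : E1 => ℂ) e) := by
        refine Submodule.span_le.mpr ?_ hy
        rintro _ ⟨g, _, f, hf, rfl⟩
        simp [LinearMap.mem_ker, he, hJv f hf]
      simpa using this
    exact (closure_minimal hsub
      (isClosed_eq (continuous_apply e) continuous_const)) hx
  refine ⟨main, fun h => ?_⟩
  have := main _ h
  simp [Set.indicator] at this
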